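/- Let Σ be a d×d symmetric positive definite real matrix, let A be a d×d symmetric invertible real matrix, and let Σ₁ be any d×d symmetric real matrix. Then ‖Σ₁ − AΣA‖_F ≥ λ_min(AΣA) · ‖Σ^{-1/2} A^{-1} Σ₁ A^{-1} Σ^{-1/2} − I‖_F, where λ_min denotes the smallest eigenvalue. (This translates an absolute Frobenius-norm guarantee for a preconditioned covariance estimate into a relative Frobenius-norm guarantee for the original covariance.) -/

import Mathlib

/-!
With `T = S^{1/2}` and `X = A T` one has `A S A = X Xᵀ` and `S₁ - A S A = X F Xᵀ`, where
`F = T⁻¹ A⁻¹ S₁ A⁻¹ T⁻¹ - 1`. The matrices `Xᵀ X` and `X Xᵀ` have the same characteristic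
polynomial, so `Xᵀ X ⪰ λ I` with `λ = λ_min(A S A)`. Hence `‖X G‖_F ≥ √λ ‖G‖_F` for every `G`,
and applying this on both sides of `F` gives `‖X F Xᵀ‖_F ≥ λ ‖F‖_F`.
-/

open MeasureTheory Matrix Real
open scoped ENNReal NNReal BigOperators

noncomputable section

instance {m n : Type*} {α : Type*} [MeasurableSpace α] : MeasurableSpace (Matrix m n α) :=
  inferInstanceAs (MeasurableSpace (m → n → α))

/-- The density of the multivariate Gaussian `N(μ, S)` on `ℝ^d`. -/
def gaussianDensity {d : ℕ} (μ : Fin d → ℝ) (S : Matrix (Fin d) (Fin d) ℝ)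
    (x : Fin d → ℝ) : ℝ :=
  (2 * Real.pi) ^ (-(d : ℝ) / 2) * S.det ^ (-(1 : ℝ) / 2) *
    Real.exp (-(dotProduct (x - μ) (S⁻¹.mulVec (x - μ))) / 2)

/-- The multivariate Gaussian measure `N(μ, S)` on `ℝ^d`. -/
def gaussianMeasure {d : ℕ} (μ : Fin d → ℝ) (S : Matrix (Fin d) (Fin d) ℝ) :
    Measure (Fin d → ℝ) :=
  volume.withDensity fun x => ENNReal.ofReal (gaussianDensity μ S x)

/-- The law `N(μ, S)^⊗n` of `n` i.i.d. samples from `N(μ, S)`. -/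
def gaussianPi {d : ℕ} (n : ℕ) (μ : Fin d → ℝ) (S : Matrix (Fin d) (Fin d) ℝ) :
    Measure (Fin n → Fin d → ℝ) :=
  Measure.pi fun _ => gaussianMeasure μ S

/-- Total variation distance between measures. -/
def tvDist {E : Type*} [MeasurableSpace E] (P Q : Measure E) : ℝ :=
  ⨆ S : {S : Set E // MeasurableSet S}, |(P S.1).toReal - (Q S.1).toReal|

/-- Frobenius norm of a matrix. -/
def frobNorm {d : ℕ} (A : Matrix (Fin d) (Fin d) ℝ) : ℝ :=
  Real.sqrt (∑ i, ∑ j, (A i j) ^ 2)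

/-- Euclidean norm of a vector. -/
def vecNorm {d : ℕ} (v : Fin d → ℝ) : ℝ := Real.sqrt (∑ i, (v i) ^ 2)

/-- `psdLE A B` is the Loewner order `A ⪯ B`, i.e. `B - A` is positive semidefinite. -/
def psdLE {d : ℕ} (A B : Matrix (Fin d) (Fin d) ℝ) : Prop := (B - A).PosSemidef

/-- Two datasets are neighboring if they differ in at most one coordinate. -/
def Neighbor {n : ℕ} {α : Type*} (x x' : Fin n → α) : Prop :=
  ∃ j, ∀ i, i ≠ j → x i = x' i

/-- Pure `ε`-differential privacy of a mechanism. -/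
def PureDP {n : ℕ} {α : Type*} {Ω : Type*} [MeasurableSpace Ω]
    (M : (Fin n → α) → Measure Ω) (ε : ℝ) : Prop :=
  ∀ x x', Neighbor x x' → ∀ S : Set Ω, MeasurableSet S →
    M x S ≤ ENNReal.ofReal (Real.exp ε) * M x' S

/-- Approximate `(ε, δ)`-differential privacy of a mechanism. -/
def ApproxDP {n : ℕ} {α : Type*} {Ω : Type*} [MeasurableSpace Ω]
    (M : (Fin n → α) → Measure Ω) (ε δ : ℝ) : Prop :=
  ∀ x x', Neighbor x x' → ∀ S : Set Ω, MeasurableSet S →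
    M x S ≤ ENNReal.ofReal (Real.exp ε) * M x' S + ENNReal.ofReal δ

/-- Unnormalized entropy `Ent(x) = ∑ᵢ (xᵢ log(1/xᵢ) + xᵢ)`
(with the convention `0 · log(1/0) = 0`, automatic in Lean). -/
def Ent {n : ℕ} (x : Fin n → ℝ) : ℝ := ∑ i, (x i * Real.log (1 / x i) + x i)

end

noncomputable section

section

open scoped ComplexOrder

/-- The square root of a positive semidefinite matrix, as `Matrix.PosSemidef.sqrt` was defined
in the older Mathlib (removed since). -/
def Matrix.PosSemidef.sqrt {n 𝕜 : Type*} [Fintype n] [DecidableEq n] [RCLike 𝕜]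
    {A : Matrix n n 𝕜} (hA : A.PosSemidef) : Matrix n n 𝕜 :=
  (hA.1.eigenvectorUnitary : Matrix n n 𝕜) *
    diagonal (fun i => ((Real.sqrt (hA.1.eigenvalues i) : ℝ) : 𝕜)) *
    (star hA.1.eigenvectorUnitary : Matrix n n 𝕜)

end

namespace Matrix

variable {n : Type*} [Fintype n] [DecidableEq n]

section Sqrt

open scoped ComplexOrder

variable {𝕜 : Type*} [RCLike 𝕜] {A : Matrix n n 𝕜}

lemma PosSemidef.posSemidef_sqrt (hA : A.PosSemidef) : hA.sqrt.PosSemidef := by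
  unfold PosSemidef.sqrt
  rw [star_eq_conjTranspose]
  exact (PosSemidef.diagonal fun i => by simp).mul_mul_conjTranspose_same _

lemma PosSemidef.sqrt_mul_self (hA : A.PosSemidef) : hA.sqrt * hA.sqrt = A := by
  set U : Matrix n n 𝕜 := ↑hA.1.eigenvectorUnitary
  set D := diagonal fun i => ((√(hA.1.eigenvalues i) : ℝ) : 𝕜)
  have hU : star U * U = 1 := Unitary.coe_star_mul_self _
  have hD : D * D = diagonal fun i => (hA.1.eigenvalues i : 𝕜) := by
    rw [diagonal_mul_diagonal]
    congr 1
    funext i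
    rw [← RCLike.ofReal_mul, Real.mul_self_sqrt (hA.eigenvalues_nonneg i)]
  calc hA.sqrt * hA.sqrt = U * D * (star U * U) * D * star U := by
        simp only [PosSemidef.sqrt, U, D, Matrix.mul_assoc]
    _ = U * diagonal (fun i => (hA.1.eigenvalues i : 𝕜)) * star U := by
        rw [hU, Matrix.mul_one, Matrix.mul_assoc U D D, hD]
    _ = A := by
        conv_rhs => rw [hA.1.spectral_theorem, Unitary.conjStarAlgAut_apply]
        rfl

end Sqrt

section Spectrum

open scoped ComplexOrder MatrixOrder

variable {𝕜 : Type*} [RCLike 𝕜]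

lemma IsHermitian.posSemidef_sub_iInf_eigenvalues_smul_one {M : Matrix n n 𝕜}
    (hM : M.IsHermitian) : (M - (⨅ i, hM.eigenvalues i) • (1 : Matrix n n 𝕜)).PosSemidef := by
  rw [← le_iff, ← Algebra.algebraMap_eq_smul_one]
  refine algebraMap_le_of_le_spectrum (fun x hx => ?_) hM.isSelfAdjoint
  rw [hM.spectrum_real_eq_range_eigenvalues] at hx
  obtain ⟨i, rfl⟩ := hx
  exact ciInf_le (Set.finite_range _).bddBelow i

lemma posSemidef_conjTranspose_mul_self_sub_smul_one {M X : Matrix n n 𝕜}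
    (hM : M.IsHermitian) (hX : X * Xᴴ = M) :
    (Xᴴ * X - (⨅ i, hM.eigenvalues i) • (1 : Matrix n n 𝕜)).PosSemidef := by
  have hXX := isHermitian_conjTranspose_mul_self X
  have : hM.eigenvalues = hXX.eigenvalues :=
    (hM.eigenvalues_eq_eigenvalues_iff hXX).mpr (by rw [← hX, charpoly_mul_comm])
  rw [this]
  exact hXX.posSemidef_sub_iInf_eigenvalues_smul_one

end Spectrum

lemma mul_trace_le_trace_of_posSemidef_sub_smul_one {m k : Type*} [Fintype m] [Fintype k]
    {X : Matrix m n ℝ} {G : Matrix n k ℝ} {l : ℝ}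
    (h : (Xᴴ * X - l • (1 : Matrix n n ℝ)).PosSemidef) :
    l * (Gᴴ * G).trace ≤ ((X * G)ᴴ * (X * G)).trace := by
  have := (h.conjTranspose_mul_mul_same G).trace_nonneg
  rw [Matrix.mul_sub, Matrix.sub_mul, trace_sub, Matrix.mul_smul, Matrix.smul_mul,
    Matrix.mul_one, trace_smul, smul_eq_mul, sub_nonneg] at this
  simpa only [conjTranspose_mul, Matrix.mul_assoc] using this

lemma mul_mul_inv_sub_one_mul {α : Type*} [CommRing α] {X Y : Matrix n n α}
    (hX : IsUnit X.det) (hY : IsUnit Y.det) (M : Matrix n n α) :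
    X * (X⁻¹ * M * Y⁻¹ - 1) * Y = M - X * Y := by
  rw [mul_sub, sub_mul, Matrix.mul_one, ← Matrix.mul_assoc, ← Matrix.mul_assoc,
    mul_nonsing_inv _ hX, Matrix.one_mul, Matrix.mul_assoc, nonsing_inv_mul _ hY, Matrix.mul_one]

end Matrix

open Matrix

lemma frobNorm_eq_sqrt_trace {d : ℕ} (G : Matrix (Fin d) (Fin d) ℝ) :
    frobNorm G = √(Gᴴ * G).trace := by
  simp only [frobNorm, trace, diag, mul_apply, conjTranspose_apply, star_trivial, sq]
  rw [Finset.sum_comm]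

lemma frobNorm_conjTranspose {d : ℕ} (G : Matrix (Fin d) (Fin d) ℝ) :
    frobNorm Gᴴ = frobNorm G := by
  simp only [frobNorm, conjTranspose_apply, star_trivial]
  rw [Finset.sum_comm]

lemma sqrt_mul_frobNorm_le_frobNorm_mul {d : ℕ} {X G : Matrix (Fin d) (Fin d) ℝ} {l : ℝ}
    (h : (Xᴴ * X - l • (1 : Matrix (Fin d) (Fin d) ℝ)).PosSemidef) :
    √l * frobNorm G ≤ frobNorm (X * G) := by
  rw [frobNorm_eq_sqrt_trace, frobNorm_eq_sqrt_trace,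
    ← Real.sqrt_mul' _ (posSemidef_conjTranspose_mul_self G).trace_nonneg]
  exact Real.sqrt_le_sqrt (mul_trace_le_trace_of_posSemidef_sub_smul_one h)

lemma mul_frobNorm_le_frobNorm_mul_mul_conjTranspose {d : ℕ} {X F : Matrix (Fin d) (Fin d) ℝ}
    {l : ℝ} (hl : 0 ≤ l) (h : (Xᴴ * X - l • (1 : Matrix (Fin d) (Fin d) ℝ)).PosSemidef) :
    l * frobNorm F ≤ frobNorm (X * F * Xᴴ) := by
  have hright : √l * frobNorm F ≤ frobNorm (F * Xᴴ) :=
    calc √l * frobNorm F = √l * frobNorm Fᴴ := by rw [frobNorm_conjTranspose]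
      _ ≤ frobNorm (X * Fᴴ) := sqrt_mul_frobNorm_le_frobNorm_mul h
      _ = frobNorm (F * Xᴴ) := by
          rw [← frobNorm_conjTranspose, conjTranspose_mul, conjTranspose_conjTranspose]
  calc l * frobNorm F = √l * (√l * frobNorm F) := by
        rw [← mul_assoc, Real.mul_self_sqrt hl]
    _ ≤ √l * frobNorm (F * Xᴴ) := by gcongr
    _ ≤ frobNorm (X * F * Xᴴ) := by
        rw [Matrix.mul_assoc]
        exact sqrt_mul_frobNorm_le_frobNorm_mul h

theorem precondition_error_translation_general {d : ℕ}
    (S S₁ A : Matrix (Fin d) (Fin d) ℝ) (hS : S.PosDef) (hA : A.IsHermitian)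
    (hAunit : IsUnit A.det)
    (hASA : (A * S * A).IsHermitian) :
    (⨅ i, hASA.eigenvalues i) *
        frobNorm ((hS.posSemidef.sqrt)⁻¹ * A⁻¹ * S₁ * A⁻¹ * (hS.posSemidef.sqrt)⁻¹ - 1)
      ≤ frobNorm (S₁ - A * S * A) := by
  set T := hS.posSemidef.sqrt
  have hTT : T * T = S := hS.posSemidef.sqrt_mul_self
  have hTH : Tᴴ = T := hS.posSemidef.posSemidef_sqrt.1
  have hT : IsUnit T.det :=
    isUnit_of_mul_isUnit_left (by rw [← det_mul, hTT]; exact hS.det_pos.ne'.isUnit)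
  set X := A * T
  have hXX : X * Xᴴ = A * S * A := by
    rw [conjTranspose_mul, hTH, hA.eq, ← hTT]; simp only [X, Matrix.mul_assoc]
  have hX : IsUnit X.det := by rw [det_mul]; exact hAunit.mul hT
  have hXH : IsUnit Xᴴ.det := by rw [det_conjTranspose]; exact hX.star
  have hE : S₁ - A * S * A = X * (T⁻¹ * A⁻¹ * S₁ * A⁻¹ * T⁻¹ - 1) * Xᴴ := by
    rw [← hXX, ← mul_mul_inv_sub_one_mul hX hXH]
    simp only [X, conjTranspose_mul, hTH, hA.eq, Matrix.mul_inv_rev, Matrix.mul_assoc]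
  have hl : 0 ≤ ⨅ i, hASA.eigenvalues i := Real.iInf_nonneg fun i =>
    (hXX ▸ posSemidef_self_mul_conjTranspose X).eigenvalues_nonneg i
  rw [hE]
  exact mul_frobNorm_le_frobNorm_mul_mul_conjTranspose hl
    (posSemidef_conjTranspose_mul_self_sub_smul_one hASA hXX)

/-- **Translating an absolute Frobenius-norm guarantee of a preconditioned covariance
estimate into a relative one.** For symmetric positive definite `S`, symmetric invertible
`A`, and any symmetric `S₁`,
`‖S₁ - A S A‖_F ≥ λ_min(A S A) · ‖S^{-1/2} A⁻¹ S₁ A⁻¹ S^{-1/2} - I‖_F`. -/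
theorem precondition_error_translation {d : ℕ}
    (S S₁ A : Matrix (Fin d) (Fin d) ℝ) (hS : S.PosDef) (hA : A.IsHermitian)
    (hAunit : IsUnit A.det) (hS₁ : S₁.IsHermitian)
    (hASA : (A * S * A).IsHermitian) :
    (⨅ i, hASA.eigenvalues i) *
        frobNorm ((hS.posSemidef.sqrt)⁻¹ * A⁻¹ * S₁ * A⁻¹ * (hS.posSemidef.sqrt)⁻¹ - 1)
      ≤ frobNorm (S₁ - A * S * A) :=
  precondition_error_translation_general S S₁ A hS hA hAunit hASA

end
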